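/- Let m, h be coprime, A a normalized semi-module for m, h with successor permutation f of B (from the type recursion), elements of B sorted increasingly as b̃₀ < ... < b̃_{h−1}. For 0 ≤ i ≤ h−1 define fᵢ: B → B by fᵢ(b̃ⱼ) = f(b̃ⱼ) for j > i, and (fᵢ(b̃₀),...,fᵢ(b̃ᵢ)) equal to the increasing rearrangement of (f(b̃₀),...,f(b̃ᵢ)); define ψⁱ ∈ ℚ^h by ψⁱ_{j+1} = (b̃ⱼ + m − fᵢ(b̃ⱼ))/h. Then ν ⪯ ψ^{i+1} ⪯ ψⁱ for all i, ψ^{h−1} = ν, and ψ⁰ = μ̃ where μ̃_{j+1} = (b̃ⱼ + m − f(b̃ⱼ))/h. -/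

import Mathlib

/-- A semi-module for `m`, `h`: a nonempty subset of `ℤ`, bounded below,
closed under addition of `m` and of `h`. -/
def IsSemiModule (m h : ℤ) (A : Set ℤ) : Prop :=
  A.Nonempty ∧ BddBelow A ∧ (∀ a ∈ A, a + m ∈ A) ∧ (∀ a ∈ A, a + h ∈ A)

/-- `B = A \ (h + A)`. -/
def BSet (h : ℤ) (A : Set ℤ) : Set ℤ := {a ∈ A | a - h ∉ A}

/-- A semi-module is normalized if the elements of `B = A \ (h+A)` sum to `h(h-1)/2`. -/
def IsNormalized (h : ℤ) (A : Set ℤ) : Prop :=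
  ∃ s : Finset ℤ, ↑s = BSet h A ∧ ∑ a ∈ s, a = h * (h - 1) / 2

/-- `max {n : ℕ | a + m - n h ∈ A}`. -/
noncomputable def maxShift (m h : ℤ) (A : Set ℤ) (a : ℤ) : ℕ :=
  sSup {n : ℕ | a + m - n * h ∈ A}

/-- The type of a normalized semi-module `A`:
`b 0 = min B`, and `b (i+1) = b i + m - μ' i · h` with `μ' i` the maximal
nonnegative integer such that `b (i+1) ∈ A`. -/
def HasType (m h : ℕ) (A : Set ℤ) (μ' : Fin h → ℕ) : Prop :=
  ∃ b : ℕ → ℤ,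
    b 0 ∈ BSet h A ∧ (∀ x ∈ BSet h A, b 0 ≤ x) ∧
    ∀ i : Fin h,
      b (i + 1) = b i + m - μ' i * h ∧ b (i + 1) ∈ A ∧
        b i + m - (μ' i + 1) * h ∉ A

/-- Partial sum of the first `i` entries of a vector in `ℕ^h`. -/
def psum {h : ℕ} (μ : Fin h → ℕ) (i : ℕ) : ℕ :=
  ∑ j : Fin h, if (j : ℕ) < i then μ j else 0

/-- Dominance order `ψ ⪯ χ` (with the paper's conventions, dominant vectors
are weakly increasing): all partial sums of `χ` are at most those of `ψ`,
with equal total sum. -/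
def Dominates {h : ℕ} (ψ χ : Fin h → ℕ) : Prop :=
  (∀ i : ℕ, psum χ i ≤ psum ψ i) ∧ psum ψ h = psum χ h

/-- An extended semi-module `(A, φ)` for `μ`. -/
def IsExtSemiModule (m h : ℕ) (A : Set ℤ) (φ : ℤ → WithBot ℕ) (μ : Fin h → ℕ) : Prop :=
  IsSemiModule m h A ∧ IsNormalized h A ∧
  (∀ a : ℤ, φ a = ⊥ ↔ a ∉ A) ∧
  (∀ a : ℤ, φ a + 1 ≤ φ (a + h)) ∧
  (∀ a ∈ A, φ a ≤ (maxShift m h A a : WithBot ℕ)) ∧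
  (∀ a ∈ A, (∀ b : ℤ, a ≤ b → b ∈ A) → φ a = (maxShift m h A a : WithBot ℕ)) ∧
  ∃ seq : Fin h → ℕ → ℤ,
    (∀ l j, seq l j ∈ A) ∧
    (∀ a ∈ A, ∃! p : Fin h × ℕ, seq p.1 p.2 = a) ∧
    (∀ l j, φ (seq l (j + 1)) = φ (seq l j) + 1) ∧
    (∀ l j, (φ (seq l j + h) = φ (seq l j) + 1 → seq l (j + 1) = seq l j + h) ∧
            (φ (seq l j + h) ≠ φ (seq l j) + 1 → seq l j + h < seq l (j + 1))) ∧
    ∃ σ : Equiv.Perm (Fin h), ∀ l, φ (seq l 0) = (μ (σ l) : WithBot ℕ)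

/-- `(A, φ)` is cyclic: `φ a = max {n : a + m - n h ∈ A}` for all `a ∈ A`. -/
def IsCyclicExt (m h : ℕ) (A : Set ℤ) (φ : ℤ → WithBot ℕ) : Prop :=
  ∀ a ∈ A, φ a = (maxShift m h A a : WithBot ℕ)

/-- The set `𝒱(A,φ) = {(a,b) ∈ A × A | b > a, φ a > φ b > φ (a - h)}`. -/
def Vset (h : ℕ) (A : Set ℤ) (φ : ℤ → WithBot ℕ) : Set (ℤ × ℤ) :=
  {p | p.1 ∈ A ∧ p.2 ∈ A ∧ p.1 < p.2 ∧ φ p.2 < φ p.1 ∧ φ (p.1 - h) < φ p.2}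

/-- `d(b,μ) = Σ_{i=0}^{h-1} Σ_{j=1}^{i} (m/h - μ_j) - (h-1)/2`. -/
def dval (m h : ℕ) (μ : Fin h → ℕ) : ℚ :=
  (∑ i ∈ Finset.range h, ((i * m : ℚ) / h - psum μ i)) - (h - 1) / 2

/-! Elements of `B` are pairwise incongruent mod `h` while `f b ≡ b + m`, so `f` permutes `B`
and every `fᵢ` is a bijection from the sorted list `b̃` onto `B`. Hence every `ψⁱ` has total `m`,
`f_{h-1}` is the sorted list itself, and the partial-sum inequalities reduce to a rearrangement
fact: `k` distinct entries of an increasing list sum to at least its first `k` entries. For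
`ψⁱ` against `ψ^{i+1}` it is applied within the first `i + 2` entries, beyond which `fᵢ` and
`f_{i+1}` have the same prefix sums. -/

open Finset

theorem sum_range_card_le_sum {M : Type*} [AddCommMonoid M] [PartialOrder M]
    [IsOrderedAddMonoid M] {c : ℕ → M} {n : ℕ} (hc : MonotoneOn c (Set.Iio n))
    {I : Finset ℕ} (hI : I ⊆ range n) : ∑ j ∈ range #I, c j ≤ ∑ i ∈ I, c i := by
  induction n generalizing I with
  | zero => simp_all
  | succ n ih =>
    have hc' : MonotoneOn c (Set.Iio n) := hc.mono (Set.Iio_subset_Iio n.le_succ)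
    have hlt : ∀ x ∈ I, x ≠ n → x ∈ range n := fun x hx hxn =>
      mem_range.2 (lt_of_le_of_ne (Nat.lt_succ_iff.1 (mem_range.1 (hI hx))) hxn)
    by_cases hn : n ∈ I
    · have hI' : I.erase n ⊆ range n := fun x hx =>
        hlt x (mem_of_mem_erase hx) (ne_of_mem_erase hx)
      have hcard : #(I.erase n) ≤ n := by simpa using card_le_card hI'
      rw [← add_sum_erase I c hn, ← card_erase_add_one hn, sum_range_succ, add_comm]
      exact add_le_add (hc (by simp; omega) (by simp) hcard) (ih hc' hI')
    · exact ih hc' fun x hx => hlt x hx (ne_of_mem_of_not_mem hx hn)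

theorem sum_range_le_sum_range_of_injOn {M : Type*} [AddCommMonoid M] [LinearOrder M]
    [IsOrderedAddMonoid M] {c g : ℕ → M} {n k : ℕ}
    (hc : StrictMonoOn c (Set.Iio n)) (hg : Set.InjOn g (Set.Iio k))
    (hgc : g '' Set.Iio k ⊆ c '' Set.Iio n) : ∑ j ∈ range k, c j ≤ ∑ j ∈ range k, g j := by
  classical
  set I := (range n).filter fun i => c i ∈ (range k).image g
  have hI : I.image c = (range k).image g := by
    ext x
    simp only [I, mem_image, mem_filter]
    constructor
    · rintro ⟨i, ⟨-, hi⟩, rfl⟩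
      exact hi
    · rintro ⟨j, hj, rfl⟩
      obtain ⟨i, hi, hij⟩ := hgc ⟨j, by simpa using hj, rfl⟩
      exact ⟨i, ⟨by simpa using hi, j, hj, hij.symm⟩, hij⟩
  have hcI : Set.InjOn c I := hc.injOn.mono fun i hi => by simpa [I] using (mem_filter.1 hi).1
  have hg' : Set.InjOn g (range k) := by rwa [coe_range]
  have hsumI : ∑ x ∈ I.image c, x = ∑ i ∈ I, c i := sum_image hcI
  have hsumg : ∑ x ∈ (range k).image g, x = ∑ j ∈ range k, g j := sum_image hg'
  calc ∑ j ∈ range k, c j = ∑ j ∈ range #I, c j := by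
        rw [← card_image_of_injOn hcI, hI, card_image_of_injOn hg', card_range]
    _ ≤ ∑ i ∈ I, c i := sum_range_card_le_sum hc.monotoneOn (filter_subset _ _)
    _ = ∑ j ∈ range k, g j := by rw [← hsumI, ← hsumg, hI]

theorem Finset.injOn_of_image_eq {α β : Type*} {f g : α → β} {s : Finset α}
    (hg : Set.InjOn g s) (h : f '' s = g '' s) : Set.InjOn f s := by
  classical
  have : s.image f = s.image g := by exact_mod_cast h
  exact injOn_of_card_image_eq (by rw [this, card_image_of_injOn hg])

theorem Finset.sum_eq_sum_of_image_eq {α β : Type*} [AddCommMonoid β] {f g : α → β}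
    {s : Finset α} (hg : Set.InjOn g s) (h : f '' s = g '' s) :
    ∑ x ∈ s, f x = ∑ x ∈ s, g x := by
  classical
  have : s.image f = s.image g := by exact_mod_cast h
  have hf : ∑ x ∈ s.image f, x = ∑ x ∈ s, f x := sum_image (injOn_of_image_eq hg h)
  have hg : ∑ x ∈ s.image g, x = ∑ x ∈ s, g x := sum_image hg
  rw [← hf, ← hg, this]

theorem StrictMonoOn.eqOn_of_image_eq {α β : Type*} [LinearOrder α] [WellFoundedLT α]
    [Preorder β] {f g : α → β} {s : Set α} (hf : StrictMonoOn f s) (hg : StrictMonoOn g s)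
    (h : f '' s = g '' s) : Set.EqOn f g s := by
  have := (hf.domRestrict.range_inj hg.domRestrict).1 (by simpa [Set.range_domRestrict] using h)
  exact fun x hx => congrFun this ⟨x, hx⟩

/-- `F i` is `g` with its entries `0, …, i` rearranged increasingly (the paper's `fᵢ`). -/
structure IsPrefixSorting {α : Type*} [LinearOrder α] (n : ℕ) (g : ℕ → α)
    (F : ℕ → ℕ → α) : Prop where
  eq_of_lt : ∀ i j, j < n → i < j → F i j = g j
  strictMonoOn : ∀ i < n, StrictMonoOn (F i) (Set.Iic i)
  image_Iic : ∀ i < n, F i '' Set.Iic i = g '' Set.Iic i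

namespace IsPrefixSorting

variable {α : Type*} [LinearOrder α] {n : ℕ} {g : ℕ → α} {F : ℕ → ℕ → α}

theorem image_Iio (hF : IsPrefixSorting n g F) {i k : ℕ} (hik : i < k) (hk : k ≤ n) :
    F i '' Set.Iio k = g '' Set.Iio k := by
  rw [← Set.Iic_union_Ioo_eq_Iio hik, Set.image_union, Set.image_union,
    hF.image_Iic i (by omega)]
  congr 1
  exact Set.image_congr fun j hj => hF.eq_of_lt i j (by grind) hj.1

theorem injOn (hF : IsPrefixSorting n g F) (hg : Set.InjOn g (Set.Iio n)) {i : ℕ}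
    (hi : i < n) : Set.InjOn (F i) (Set.Iio n) := by
  rw [← coe_range] at hg ⊢
  exact injOn_of_image_eq hg (by rw [coe_range, hF.image_Iio hi le_rfl])

theorem eq_zero (hF : IsPrefixSorting n g F) {j : ℕ} (hj : j < n) : F 0 j = g j := by
  rcases Nat.eq_zero_or_pos j with rfl | hj0
  · have h0 : Set.Iic (0 : ℕ) = {0} := by ext; simp
    simpa [h0] using hF.image_Iic 0 hj
  · exact hF.eq_of_lt 0 j hj hj0

theorem sum_range_succ_le [AddCommMonoid α] [IsOrderedAddMonoid α]
    (hF : IsPrefixSorting n g F) (hg : Set.InjOn g (Set.Iio n)) {i k : ℕ} (hi : i + 1 < n)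
    (hk : k ≤ n) : ∑ j ∈ range k, F (i + 1) j ≤ ∑ j ∈ range k, F i j := by
  have hinj : ∀ i' < n, Set.InjOn (F i') (range k) := fun i' hi' =>
    (hF.injOn hg hi').mono (by simpa using Set.Iio_subset_Iio hk)
  by_cases hki : k ≤ i + 2
  · refine sum_range_le_sum_range_of_injOn (n := i + 1 + 1) ?_
      (by simpa using hinj i (by omega)) ?_
    · rw [Set.Iio_add_one_eq_Iic]
      exact hF.strictMonoOn (i + 1) hi
    · refine (Set.image_mono (Set.Iio_subset_Iio hki)).trans_eq ?_
      rw [hF.image_Iio (by omega) hi, hF.image_Iio (i := i + 1) (by omega) hi]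
  · refine (sum_eq_sum_of_image_eq (hinj i (by omega)) ?_).le
    rw [coe_range, hF.image_Iio (by omega) hk, hF.image_Iio (by omega) hk]

variable {b : ℕ → α}

theorem eqOn_last (hF : IsPrefixSorting n g F) (hb : StrictMonoOn b (Set.Iio n))
    (hgb : g '' Set.Iio n = b '' Set.Iio n) : Set.EqOn (F (n - 1)) b (Set.Iio n) := by
  rcases Nat.eq_zero_or_pos n with rfl | hn
  · simp
  have hIio : Set.Iio n = Set.Iic (n - 1) := by
    rw [← Set.Iio_add_one_eq_Iic, Nat.sub_one_add_one hn.ne']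
  refine StrictMonoOn.eqOn_of_image_eq ?_ hb ?_
  · rw [hIio]
    exact hF.strictMonoOn _ (by omega)
  · rw [hF.image_Iio (by omega) le_rfl, hgb]

theorem sum_range_eq [AddCommMonoid α] (hF : IsPrefixSorting n g F)
    (hb : StrictMonoOn b (Set.Iio n)) (hgb : g '' Set.Iio n = b '' Set.Iio n) {i : ℕ}
    (hi : i < n) : ∑ j ∈ range n, F i j = ∑ j ∈ range n, b j :=
  sum_eq_sum_of_image_eq (by simpa using hb.injOn)
    (by rw [coe_range, hF.image_Iio hi le_rfl, hgb])

theorem sum_range_le [AddCommMonoid α] [IsOrderedAddMonoid α] (hF : IsPrefixSorting n g F)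
    (hg : Set.InjOn g (Set.Iio n)) (hb : StrictMonoOn b (Set.Iio n))
    (hgb : g '' Set.Iio n = b '' Set.Iio n) {i k : ℕ} (hi : i < n) (hk : k ≤ n) :
    ∑ j ∈ range k, b j ≤ ∑ j ∈ range k, F i j := by
  refine sum_range_le_sum_range_of_injOn hb
    ((hF.injOn hg hi).mono (Set.Iio_subset_Iio hk)) ?_
  rw [← hgb, ← hF.image_Iio hi le_rfl]
  exact Set.image_mono (Set.Iio_subset_Iio hk)

end IsPrefixSorting

theorem add_natCast_mul_mem {h : ℤ} {A : Set ℤ} (hA : ∀ a ∈ A, a + h ∈ A) {a : ℤ}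
    (ha : a ∈ A) : ∀ k : ℕ, a + k * h ∈ A
  | 0 => by simpa
  | k + 1 => by simpa [add_mul, ← add_assoc] using hA _ (add_natCast_mul_mem hA ha k)

theorem eq_of_mem_BSet_of_dvd_sub {h : ℤ} {A : Set ℤ} (hA : ∀ a ∈ A, a + h ∈ A) {x y : ℤ}
    (hx : x ∈ BSet h A) (hy : y ∈ BSet h A) (hxy : h ∣ y - x) : x = y := by
  obtain ⟨k, hk⟩ := hxy
  rcases lt_trichotomy k 0 with hk0 | rfl | hk0
  · have := add_natCast_mul_mem hA hy.1 (-k - 1).toNat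
    rw [Int.toNat_of_nonneg (by omega)] at this
    exact absurd (by convert this using 1; linear_combination -hk) hx.2
  · simpa [sub_eq_zero, eq_comm] using hk
  · have := add_natCast_mul_mem hA hx.1 (k - 1).toNat
    rw [Int.toNat_of_nonneg (by omega)] at this
    exact absurd (by convert this using 1; linear_combination hk) hy.2

theorem bijOn_BSet_of_dvd {m h : ℤ} {A : Set ℤ} (hA : ∀ a ∈ A, a + h ∈ A)
    (hfin : (BSet h A).Finite) {f : ℤ → ℤ}
    (hf : ∀ x ∈ BSet h A, f x ∈ BSet h A ∧ h ∣ x + m - f x) :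
    Set.BijOn f (BSet h A) (BSet h A) := by
  refine (hfin.injOn_iff_bijOn_of_mapsTo fun x hx => (hf x hx).1).1 fun x hx y hy hxy => ?_
  refine eq_of_mem_BSet_of_dvd_sub hA hx hy ?_
  have := dvd_sub (hf y hy).2 (hf x hx).2
  rwa [hxy, show y + m - f y - (x + m - f y) = y - x by ring] at this

theorem sorted_successor_interpolation_general (m h : ℕ)
    (A : Set ℤ) (hA : IsSemiModule m h A)
    (bt : ℕ → ℤ)
    (hbt : ∀ i < h, bt i ∈ BSet h A)
    (hbtmono : ∀ i j : ℕ, i < j → j < h → bt i < bt j)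
    (hbtsurj : ∀ x ∈ BSet h A, ∃ i < h, bt i = x)
    (f : ℤ → ℤ)
    (hf : ∀ x ∈ BSet h A, f x ∈ BSet h A ∧ (h : ℤ) ∣ x + m - f x)
    (F : ℕ → ℕ → ℤ)
    (hFtail : ∀ i j : ℕ, j < h → i < j → F i j = f (bt j))
    (hFsorted : ∀ i < h, ∀ j k : ℕ, j < k → k ≤ i → F i j < F i k)
    (hFvals : ∀ i < h, {x : ℤ | ∃ j ≤ i, F i j = x} = {x : ℤ | ∃ j ≤ i, f (bt j) = x})
    (ψ : ℕ → ℕ → ℚ)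
    (hψ : ∀ i j : ℕ, ψ i j = ((bt j : ℚ) + m - F i j) / h) :
    (∀ j < h, ψ 0 j = ((bt j : ℚ) + m - f (bt j)) / h) ∧
      (∀ j < h, ψ (h - 1) j = (m : ℚ) / h) ∧
      (∀ i < h, ∑ j ∈ Finset.range h, ψ i j = m) ∧
      (∀ i : ℕ, i + 1 < h → ∀ i₀ ≤ h,
        ∑ j ∈ Finset.range i₀, ψ i j ≤ ∑ j ∈ Finset.range i₀, ψ (i + 1) j) ∧
      (∀ i < h, ∀ i₀ ≤ h, ∑ j ∈ Finset.range i₀, ψ i j ≤ (i₀ * m : ℚ) / h) := by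
  have hb : StrictMonoOn bt (Set.Iio h) := fun i _ j hj hij => hbtmono i j hij hj
  have hB : bt '' Set.Iio h = BSet h A := by
    have hmaps : Set.MapsTo bt (Set.Iio h) (BSet h A) := fun i hi => hbt i hi
    refine hmaps.image_subset.antisymm fun x hx => ?_
    obtain ⟨i, hi, rfl⟩ := hbtsurj x hx
    exact ⟨i, hi, rfl⟩
  have hfB : Set.BijOn f (BSet h A) (BSet h A) :=
    bijOn_BSet_of_dvd hA.2.2.2 (hB ▸ (Set.finite_Iio h).image bt) hf
  have hg : Set.InjOn (fun j => f (bt j)) (Set.Iio h) :=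
    hfB.injOn.comp hb.injOn fun i hi => hB ▸ Set.mem_image_of_mem bt hi
  have hgb : (fun j => f (bt j)) '' Set.Iio h = bt '' Set.Iio h := by
    rw [← Set.image_image, hB, hfB.image_eq]
  have hF : IsPrefixSorting h (fun j => f (bt j)) F :=
    ⟨hFtail, fun i hi j _ k hk hjk => hFsorted i hi j k hjk hk, hFvals⟩
  have hψsum : ∀ i k, ∑ j ∈ range k, ψ i j =
      (((∑ j ∈ range k, bt j : ℤ) : ℚ) - ((∑ j ∈ range k, F i j : ℤ) : ℚ) + k * m) / h := by
    intro i k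
    simp only [hψ, ← sum_div, sum_sub_distrib, sum_add_distrib, sum_const, card_range,
      nsmul_eq_mul, Int.cast_sum]
    ring
  refine ⟨fun j hj => by rw [hψ, hF.eq_zero hj], fun j hj => ?_, fun i hi => ?_,
    fun i hi k hk => ?_, fun i hi k hk => ?_⟩
  · rw [hψ, hF.eqOn_last hb hgb hj, add_sub_cancel_left]
  · have : (h : ℚ) ≠ 0 := Nat.cast_ne_zero.2 (by omega)
    rw [hψsum, hF.sum_range_eq hb hgb hi]
    field_simp
    ring
  · rw [hψsum, hψsum]
    have : ((∑ j ∈ range k, F (i + 1) j : ℤ) : ℚ) ≤ ((∑ j ∈ range k, F i j : ℤ) : ℚ) := by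
      exact_mod_cast hF.sum_range_succ_le hg hi hk
    gcongr ?_ / _
    linarith
  · rw [hψsum]
    have : ((∑ j ∈ range k, bt j : ℤ) : ℚ) ≤ ((∑ j ∈ range k, F i j : ℤ) : ℚ) := by
      exact_mod_cast hF.sum_range_le hg hb hgb hi hk
    gcongr ?_ / _
    linarith

/-- with `b̃₀ < … < b̃_{h-1}` the elements of `B`, `f` the
successor permutation of `B`, and `fᵢ` obtained from `f` by sorting the first
`i+1` values increasingly, define `ψⁱ_{j+1} = (b̃ⱼ + m - fᵢ(b̃ⱼ))/h`. Then
`ν ⪯ ψ^{i+1} ⪯ ψⁱ` (in terms of partial sums), `ψ^{h-1} = ν`, and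
`ψ⁰ = μ̃` where `μ̃_{j+1} = (b̃ⱼ + m - f(b̃ⱼ))/h`. -/
theorem sorted_successor_interpolation (m h : ℕ) (hm : 0 < m) (hh : 0 < h)
    (hcop : Nat.Coprime m h) (A : Set ℤ) (hA : IsSemiModule m h A)
    (hnorm : IsNormalized h A) (bt : ℕ → ℤ)
    (hbt : ∀ i < h, bt i ∈ BSet h A)
    (hbtmono : ∀ i j : ℕ, i < j → j < h → bt i < bt j)
    (hbtsurj : ∀ x ∈ BSet h A, ∃ i < h, bt i = x)
    (f : ℤ → ℤ)
    (hf : ∀ x ∈ BSet h A, f x ∈ BSet h A ∧ (h : ℤ) ∣ x + m - f x)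
    (F : ℕ → ℕ → ℤ)
    (hFtail : ∀ i j : ℕ, j < h → i < j → F i j = f (bt j))
    (hFsorted : ∀ i < h, ∀ j k : ℕ, j < k → k ≤ i → F i j < F i k)
    (hFvals : ∀ i < h, {x : ℤ | ∃ j ≤ i, F i j = x} = {x : ℤ | ∃ j ≤ i, f (bt j) = x})
    (ψ : ℕ → ℕ → ℚ)
    (hψ : ∀ i j : ℕ, ψ i j = ((bt j : ℚ) + m - F i j) / h) :
    (∀ j < h, ψ 0 j = ((bt j : ℚ) + m - f (bt j)) / h) ∧
      (∀ j < h, ψ (h - 1) j = (m : ℚ) / h) ∧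
      (∀ i < h, ∑ j ∈ Finset.range h, ψ i j = m) ∧
      (∀ i : ℕ, i + 1 < h → ∀ i₀ ≤ h,
        ∑ j ∈ Finset.range i₀, ψ i j ≤ ∑ j ∈ Finset.range i₀, ψ (i + 1) j) ∧
      (∀ i < h, ∀ i₀ ≤ h, ∑ j ∈ Finset.range i₀, ψ i j ≤ (i₀ * m : ℚ) / h) :=
  sorted_successor_interpolation_general m h A hA bt hbt hbtmono hbtsurj f hf F hFtail hFsorted
    hFvals ψ hψ
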